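/- Let x̄ ∈ F be a locally optimal solution of (MPSC). Assume that x̄ is an S-stationary point of (MPSC) and that MPSC-WSOCQ holds at x̄. Then MPSC-WSONC holds at x̄: for every multiplier vector (λ, ρ, μ, ν) satisfying the S-stationarity system at x̄ and every d̃ ∈ C̃^MPSC_F(x̄), one has d̃ᵀ∇²ℓ(x̄)d̃ ≥ 0, where ℓ := f + Σ_i λ_i g_i + Σ_j ρ_j h_j + Σ_k μ_k G_k + Σ_k ν_k H_k. -/

import Mathlib

open Set Filter Topology Metric

noncomputable section

namespace MPSC

abbrev Vec (n : ℕ) := EuclideanSpace ℝ (Fin n)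

variable {n m p l : ℕ}

open scoped Classical in
/-- Sum of a function over an index set (finite ambient type). -/
noncomputable def sumOver {α β : Type*} [Fintype α] [AddCommMonoid β]
    (S : Set α) (v : α → β) : β :=
  ∑ a, if a ∈ S then v a else 0

/-- The feasible set of (MPSC). -/
def Feas (g : Fin m → Vec n → ℝ) (h : Fin p → Vec n → ℝ)
    (G H : Fin l → Vec n → ℝ) : Set (Vec n) :=
  {x | (∀ i, g i x ≤ 0) ∧ (∀ j, h j x = 0) ∧ ∀ k, G k x * H k x = 0}

/-- Index set of active inequality constraints. -/
def Ig (g : Fin m → Vec n → ℝ) (xb : Vec n) : Set (Fin m) := {i | g i xb = 0}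

def IG (G H : Fin l → Vec n → ℝ) (xb : Vec n) : Set (Fin l) :=
  {k | G k xb = 0 ∧ H k xb ≠ 0}

def IH (G H : Fin l → Vec n → ℝ) (xb : Vec n) : Set (Fin l) :=
  {k | G k xb ≠ 0 ∧ H k xb = 0}

def IGH (G H : Fin l → Vec n → ℝ) (xb : Vec n) : Set (Fin l) :=
  {k | G k xb = 0 ∧ H k xb = 0}

/-- (β1, β2) is a disjoint bipartition of I_GH. -/
def Partition (G H : Fin l → Vec n → ℝ) (xb : Vec n) (β1 β2 : Set (Fin l)) : Prop :=
  β1 ∩ β2 = ∅ ∧ β1 ∪ β2 = IGH G H xb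

/-- Branch feasible set. -/
def BranchFeas (g : Fin m → Vec n → ℝ) (h : Fin p → Vec n → ℝ)
    (G H : Fin l → Vec n → ℝ) (xb : Vec n) (β1 β2 : Set (Fin l)) : Set (Vec n) :=
  {x | (∀ i, g i x ≤ 0) ∧ (∀ j, h j x = 0) ∧
    (∀ k ∈ IG G H xb ∪ β1, G k x = 0) ∧ ∀ k ∈ IH G H xb ∪ β2, H k x = 0}

/-- Bouligand tangent cone, as defined in the paper. -/
def tangentCone (Ω : Set (Vec n)) (xb : Vec n) : Set (Vec n) :=
  {d | ∃ t : ℕ → ℝ, ∃ x : ℕ → Vec n, (∀ k, 0 ≤ t k) ∧ (∀ k, x k ∈ Ω) ∧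
    Tendsto x atTop (nhds xb) ∧ Tendsto (fun k => t k • (x k - xb)) atTop (nhds d)}

/-- MPSC linearization cone. -/
def LCone (g : Fin m → Vec n → ℝ) (h : Fin p → Vec n → ℝ)
    (G H : Fin l → Vec n → ℝ) (xb : Vec n) : Set (Vec n) :=
  {d | (∀ i ∈ Ig g xb, fderiv ℝ (g i) xb d ≤ 0) ∧ (∀ j, fderiv ℝ (h j) xb d = 0) ∧
    (∀ k ∈ IG G H xb, fderiv ℝ (G k) xb d = 0) ∧ (∀ k ∈ IH G H xb, fderiv ℝ (H k) xb d = 0) ∧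
    ∀ k ∈ IGH G H xb, fderiv ℝ (G k) xb d * fderiv ℝ (H k) xb d = 0}

/-- Branch linearization cone. -/
def BranchLCone (g : Fin m → Vec n → ℝ) (h : Fin p → Vec n → ℝ)
    (G H : Fin l → Vec n → ℝ) (xb : Vec n) (β1 β2 : Set (Fin l)) : Set (Vec n) :=
  {d | (∀ i ∈ Ig g xb, fderiv ℝ (g i) xb d ≤ 0) ∧ (∀ j, fderiv ℝ (h j) xb d = 0) ∧
    (∀ k ∈ IG G H xb ∪ β1, fderiv ℝ (G k) xb d = 0) ∧
    ∀ k ∈ IH G H xb ∪ β2, fderiv ℝ (H k) xb d = 0}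

/-- MPSC critical subspace. -/
def CritSubspace (g : Fin m → Vec n → ℝ) (h : Fin p → Vec n → ℝ)
    (G H : Fin l → Vec n → ℝ) (xb : Vec n) : Set (Vec n) :=
  {d | (∀ i ∈ Ig g xb, fderiv ℝ (g i) xb d = 0) ∧ (∀ j, fderiv ℝ (h j) xb d = 0) ∧
    (∀ k ∈ IG G H xb ∪ IGH G H xb, fderiv ℝ (G k) xb d = 0) ∧
    ∀ k ∈ IH G H xb ∪ IGH G H xb, fderiv ℝ (H k) xb d = 0}

/-- Rank (dimension of the span) of the family of gradients
{∇g_i(x)}_{i∈I1} ∪ {∇h_j(x)}_j ∪ {∇G_k(x)}_{k∈I3} ∪ {∇H_k(x)}_{k∈I4}. -/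
def gradRank (g : Fin m → Vec n → ℝ) (h : Fin p → Vec n → ℝ)
    (G H : Fin l → Vec n → ℝ) (I1 : Set (Fin m)) (I3 I4 : Set (Fin l)) (x : Vec n) : ℕ :=
  Module.finrank ℝ ↥(Submodule.span ℝ
    ((fun i => gradient (g i) x) '' I1 ∪ Set.range (fun j => gradient (h j) x) ∪
     (fun k => gradient (G k) x) '' I3 ∪ (fun k => gradient (H k) x) '' I4))

/-- MPSC-LICQ. -/
def LICQ (g : Fin m → Vec n → ℝ) (h : Fin p → Vec n → ℝ)
    (G H : Fin l → Vec n → ℝ) (xb : Vec n) : Prop :=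
  ∀ (lam : Fin m → ℝ) (ρ : Fin p → ℝ) (μ ν : Fin l → ℝ),
    (∀ i, i ∉ Ig g xb → lam i = 0) →
    (∀ k, k ∉ IG G H xb ∪ IGH G H xb → μ k = 0) →
    (∀ k, k ∉ IH G H xb ∪ IGH G H xb → ν k = 0) →
    ∑ i, lam i • gradient (g i) xb + ∑ j, ρ j • gradient (h j) xb +
      ∑ k, μ k • gradient (G k) xb + ∑ k, ν k • gradient (H k) xb = 0 →
    lam = 0 ∧ ρ = 0 ∧ μ = 0 ∧ ν = 0

/-- MPSC-RCRCQ. -/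
def RCRCQ (g : Fin m → Vec n → ℝ) (h : Fin p → Vec n → ℝ)
    (G H : Fin l → Vec n → ℝ) (xb : Vec n) : Prop :=
  ∃ ε > (0:ℝ), ∀ I1 : Set (Fin m), I1 ⊆ Ig g xb →
    ∀ I3 I4 : Set (Fin l), I3 ⊆ IGH G H xb → I4 ⊆ IGH G H xb →
      ∀ x : Vec n, ‖x - xb‖ < ε →
        gradRank g h G H I1 (I3 ∪ IG G H xb) (I4 ∪ IH G H xb) x =
        gradRank g h G H I1 (I3 ∪ IG G H xb) (I4 ∪ IH G H xb) xb

/-- MPSC-WCR. -/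
def WCR (g : Fin m → Vec n → ℝ) (h : Fin p → Vec n → ℝ)
    (G H : Fin l → Vec n → ℝ) (xb : Vec n) : Prop :=
  ∃ ε > (0:ℝ), ∀ x : Vec n, ‖x - xb‖ < ε →
    gradRank g h G H (Ig g xb) (IG G H xb ∪ IGH G H xb) (IH G H xb ∪ IGH G H xb) x =
    gradRank g h G H (Ig g xb) (IG G H xb ∪ IGH G H xb) (IH G H xb ∪ IGH G H xb) xb

/-- MPSC-PWCR. -/
def PWCR (g : Fin m → Vec n → ℝ) (h : Fin p → Vec n → ℝ)
    (G H : Fin l → Vec n → ℝ) (xb : Vec n) : Prop :=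
  ∀ β1 β2 : Set (Fin l), Partition G H xb β1 β2 →
    ∃ ε > (0:ℝ), ∀ x : Vec n, ‖x - xb‖ < ε →
      gradRank g h G H (Ig g xb) (IG G H xb ∪ β1) (IH G H xb ∪ β2) x =
      gradRank g h G H (Ig g xb) (IG G H xb ∪ β1) (IH G H xb ∪ β2) xb

/-- The index set I_g^- associated with a branch (β1, β2). -/
def IgMinus (g : Fin m → Vec n → ℝ) (h : Fin p → Vec n → ℝ)
    (G H : Fin l → Vec n → ℝ) (xb : Vec n) (β1 β2 : Set (Fin l)) : Set (Fin m) :=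
  {i | i ∈ Ig g xb ∧ ∃ (lam : Fin m → ℝ) (ρ : Fin p → ℝ) (μ ν : Fin l → ℝ),
    (∀ i', 0 ≤ lam i') ∧ (∀ i', i' ∉ Ig g xb \ {i} → lam i' = 0) ∧
    (∀ k, k ∉ IG G H xb ∪ β1 → μ k = 0) ∧ (∀ k, k ∉ IH G H xb ∪ β2 → ν k = 0) ∧
    -gradient (g i) xb = ∑ i', lam i' • gradient (g i') xb + ∑ j, ρ j • gradient (h j) xb +
      ∑ k, μ k • gradient (G k) xb + ∑ k, ν k • gradient (H k) xb}

/-- MPSC-PCRSC. -/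
def PCRSC (g : Fin m → Vec n → ℝ) (h : Fin p → Vec n → ℝ)
    (G H : Fin l → Vec n → ℝ) (xb : Vec n) : Prop :=
  ∀ β1 β2 : Set (Fin l), Partition G H xb β1 β2 →
    ∃ ε > (0:ℝ), ∀ x : Vec n, ‖x - xb‖ < ε →
      gradRank g h G H (IgMinus g h G H xb β1 β2) (IG G H xb ∪ β1) (IH G H xb ∪ β2) x =
      gradRank g h G H (IgMinus g h G H xb β1 β2) (IG G H xb ∪ β1) (IH G H xb ∪ β2) xb

/-- A twice differentiable arc on [0, δ) (one-sided at the endpoint 0),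
with first derivative ξ'. -/
def TwiceDiffArc (δ : ℝ) (ξ ξ' : ℝ → Vec n) : Prop :=
  (∀ t ∈ Ico (0:ℝ) δ, HasDerivWithinAt ξ (ξ' t) (Ico (0:ℝ) δ) t) ∧
  ∀ t ∈ Ico (0:ℝ) δ, DifferentiableWithinAt ℝ ξ' (Ico (0:ℝ) δ) t

/-- MPSC-SSOCQ. -/
def SSOCQ (g : Fin m → Vec n → ℝ) (h : Fin p → Vec n → ℝ)
    (G H : Fin l → Vec n → ℝ) (xb : Vec n) : Prop :=
  ∀ d ∈ LCone g h G H xb, d ≠ 0 →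
    ∃ δ > (0:ℝ), ∃ J K : Set (Fin l), J ⊆ IGH G H xb ∧ K ⊆ IGH G H xb ∧
      ∃ ξ ξ' : ℝ → Vec n, TwiceDiffArc δ ξ ξ' ∧
        (∀ t ∈ Ico (0:ℝ) δ, ξ t ∈ Feas g h G H) ∧
        ξ 0 = xb ∧ ξ' 0 = d ∧
        (∀ t ∈ Ico (0:ℝ) δ, ∀ i ∈ Ig g xb, fderiv ℝ (g i) xb d = 0 → g i (ξ t) = 0) ∧
        (∀ t ∈ Ico (0:ℝ) δ, ∀ k ∈ IG G H xb ∪ J, G k (ξ t) = 0) ∧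
        ∀ t ∈ Ico (0:ℝ) δ, ∀ k ∈ IH G H xb ∪ K, H k (ξ t) = 0

/-- MPSC-WSOCQ. -/
def WSOCQ (g : Fin m → Vec n → ℝ) (h : Fin p → Vec n → ℝ)
    (G H : Fin l → Vec n → ℝ) (xb : Vec n) : Prop :=
  ∀ d ∈ CritSubspace g h G H xb, d ≠ 0 →
    ∃ δ > (0:ℝ), ∃ J K : Set (Fin l), J ⊆ IGH G H xb ∧ K ⊆ IGH G H xb ∧
      ∃ ζ ζ' : ℝ → Vec n, TwiceDiffArc δ ζ ζ' ∧
        (∀ t ∈ Ico (0:ℝ) δ, ζ t ∈ Feas g h G H) ∧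
        ζ 0 = xb ∧ ζ' 0 = d ∧
        (∀ t ∈ Ico (0:ℝ) δ, ∀ i ∈ Ig g xb, g i (ζ t) = 0) ∧
        (∀ t ∈ Ico (0:ℝ) δ, ∀ k ∈ IG G H xb ∪ J, G k (ζ t) = 0) ∧
        ∀ t ∈ Ico (0:ℝ) δ, ∀ k ∈ IH G H xb ∪ K, H k (ζ t) = 0

/-- The S-stationarity system for multipliers (λ, ρ, μ, ν) at xb. -/
def SStationarySystem (f : Vec n → ℝ) (g : Fin m → Vec n → ℝ) (h : Fin p → Vec n → ℝ)
    (G H : Fin l → Vec n → ℝ) (xb : Vec n)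
    (lam : Fin m → ℝ) (ρ : Fin p → ℝ) (μ ν : Fin l → ℝ) : Prop :=
  (∀ i, 0 ≤ lam i) ∧ (∀ i, lam i * g i xb = 0) ∧
  (∀ k ∈ IH G H xb ∪ IGH G H xb, μ k = 0) ∧
  (∀ k ∈ IG G H xb ∪ IGH G H xb, ν k = 0) ∧
  gradient f xb + ∑ i, lam i • gradient (g i) xb + ∑ j, ρ j • gradient (h j) xb +
    ∑ k, μ k • gradient (G k) xb + ∑ k, ν k • gradient (H k) xb = 0

def SStationary (f : Vec n → ℝ) (g : Fin m → Vec n → ℝ) (h : Fin p → Vec n → ℝ)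
    (G H : Fin l → Vec n → ℝ) (xb : Vec n) : Prop :=
  ∃ (lam : Fin m → ℝ) (ρ : Fin p → ℝ) (μ ν : Fin l → ℝ),
    SStationarySystem f g h G H xb lam ρ μ ν

/-- The M-stationarity system for multipliers (λ, ρ, μ, ν) at xb. -/
def MStationarySystem (f : Vec n → ℝ) (g : Fin m → Vec n → ℝ) (h : Fin p → Vec n → ℝ)
    (G H : Fin l → Vec n → ℝ) (xb : Vec n)
    (lam : Fin m → ℝ) (ρ : Fin p → ℝ) (μ ν : Fin l → ℝ) : Prop :=
  (∀ i, 0 ≤ lam i) ∧ (∀ i, lam i * g i xb = 0) ∧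
  (∀ k ∈ IH G H xb, μ k = 0) ∧ (∀ k ∈ IG G H xb, ν k = 0) ∧
  (∀ k ∈ IGH G H xb, μ k * ν k = 0) ∧
  gradient f xb + ∑ i, lam i • gradient (g i) xb + ∑ j, ρ j • gradient (h j) xb +
    ∑ k, μ k • gradient (G k) xb + ∑ k, ν k • gradient (H k) xb = 0

def MStationary (f : Vec n → ℝ) (g : Fin m → Vec n → ℝ) (h : Fin p → Vec n → ℝ)
    (G H : Fin l → Vec n → ℝ) (xb : Vec n) : Prop :=
  ∃ (lam : Fin m → ℝ) (ρ : Fin p → ℝ) (μ ν : Fin l → ℝ),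
    MStationarySystem f g h G H xb lam ρ μ ν

/-- Local optimality for (MPSC). -/
def LocallyOptimal (f : Vec n → ℝ) (g : Fin m → Vec n → ℝ) (h : Fin p → Vec n → ℝ)
    (G H : Fin l → Vec n → ℝ) (xb : Vec n) : Prop :=
  xb ∈ Feas g h G H ∧ ∃ ε > (0:ℝ), ∀ x ∈ Feas g h G H, ‖x - xb‖ < ε → f xb ≤ f x

/-- Hessian quadratic form dᵀ∇²φ(x)d. -/
def hessForm (φ : Vec n → ℝ) (x d : Vec n) : ℝ :=
  iteratedFDeriv ℝ 2 φ x ![d, d]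

/-- The Lagrange function ℓ. -/
def lagr (f : Vec n → ℝ) (g : Fin m → Vec n → ℝ) (h : Fin p → Vec n → ℝ)
    (G H : Fin l → Vec n → ℝ)
    (lam : Fin m → ℝ) (ρ : Fin p → ℝ) (μ ν : Fin l → ℝ) : Vec n → ℝ :=
  fun x => f x + ∑ i, lam i * g i x + ∑ j, ρ j * h j x +
    ∑ k, μ k * G k x + ∑ k, ν k * H k x

/-- Constraint-violation residual. -/
def residual (g : Fin m → Vec n → ℝ) (h : Fin p → Vec n → ℝ)
    (G H : Fin l → Vec n → ℝ) (x : Vec n) : ℝ :=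
  Real.sqrt (∑ i, max (g i x) 0 ^ 2 + ∑ j, h j x ^ 2 + ∑ k, min (G k x ^ 2) (H k x ^ 2))

/-- Penalty function P_κ. -/
def Pen (f : Vec n → ℝ) (g : Fin m → Vec n → ℝ) (h : Fin p → Vec n → ℝ)
    (G H : Fin l → Vec n → ℝ) (κ : ℝ) (x : Vec n) : ℝ :=
  f x + κ * residual g h G H x

/-- MPSC piecewise second-order quasi-normality. -/
def PSOQN (g : Fin m → Vec n → ℝ) (h : Fin p → Vec n → ℝ)
    (G H : Fin l → Vec n → ℝ) (xb : Vec n) : Prop :=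
  ∀ β1 β2 : Set (Fin l), Partition G H xb β1 β2 →
    ¬ ∃ (lam : Fin m → ℝ) (ρ : Fin p → ℝ) (μ ν : Fin l → ℝ),
      (∀ i, 0 ≤ lam i) ∧
      (∀ k, k ∉ IG G H xb ∪ β1 → μ k = 0) ∧ (∀ k, k ∉ IH G H xb ∪ β2 → ν k = 0) ∧
      ¬(lam = 0 ∧ ρ = 0 ∧ μ = 0 ∧ ν = 0) ∧
      (∑ i, lam i • gradient (g i) xb + ∑ j, ρ j • gradient (h j) xb +
        ∑ k, μ k • gradient (G k) xb + ∑ k, ν k • gradient (H k) xb = 0) ∧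
      (∀ d : Vec n, (∀ i ∈ Ig g xb, fderiv ℝ (g i) xb d = 0) →
        (∀ j, fderiv ℝ (h j) xb d = 0) →
        (∀ k ∈ IG G H xb ∪ β1, fderiv ℝ (G k) xb d = 0) →
        (∀ k ∈ IH G H xb ∪ β2, fderiv ℝ (H k) xb d = 0) →
        0 ≤ ∑ i, lam i * hessForm (g i) xb d + ∑ j, ρ j * hessForm (h j) xb d +
          ∑ k, μ k * hessForm (G k) xb d + ∑ k, ν k * hessForm (H k) xb d) ∧
      ∃ xs : ℕ → Vec n, Tendsto xs atTop (nhds xb) ∧ ∀ s,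
        (∀ i, 0 < lam i → 0 < lam i * g i (xs s)) ∧
        (∀ j, ρ j ≠ 0 → 0 < ρ j * h j (xs s)) ∧
        (∀ k, μ k ≠ 0 → 0 < μ k * G k (xs s)) ∧
        (∀ k, ν k ≠ 0 → 0 < ν k * H k (xs s))

/-!
Along the arc `ζ` supplied by MPSC-WSOCQ every constraint that carries a nonzero S-multiplier
stays active, so the Lagrangian `ℓ` agrees with `f` on `ζ`, and local optimality makes `t ↦ ℓ (ζ t)`
minimal at `t = 0` on `[0, δ)`. Stationarity kills `∇ℓ(x̄)`, so the second derivative of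
`ℓ ∘ ζ` at `0` is `d̃ᵀ∇²ℓ(x̄)d̃` (the curvature term `∇ℓ(x̄)ᵀζ''(0)` drops out), and a one-sided
minimum with vanishing first derivative has a nonnegative second derivative.
-/

theorem hessForm_eq_fderiv_fderiv (φ : Vec n → ℝ) (x d : Vec n) :
    hessForm φ x d = fderiv ℝ (fderiv ℝ φ) x d d := by
  simp [hessForm, iteratedFDeriv_two_apply]

theorem nonneg_of_isLocalMinOn_Ico_of_hasDerivWithinAt {φ φ' : ℝ → ℝ} {δ c : ℝ} (hδ : 0 < δ)
    (hφ : ∀ t ∈ Ico 0 δ, HasDerivWithinAt φ (φ' t) (Ico 0 δ) t) (hφ'0 : φ' 0 = 0)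
    (hφ' : HasDerivWithinAt φ' c (Ico 0 δ) 0) (hmin : IsLocalMinOn φ (Ico 0 δ) 0) :
    0 ≤ c := by
  by_contra! hc
  have hslope : Tendsto (slope φ' 0) (𝓝[>] 0) (𝓝 c) := by
    rw [← nhdsWithin_Ioo_eq_nhdsGT hδ]
    exact (hasDerivWithinAt_iff_tendsto_slope' (by simp)).1 (hφ'.mono Ioo_subset_Ico_self)
  have hmin' : ∀ᶠ t in 𝓝[>] 0, φ 0 ≤ φ t :=
    nhdsWithin_mono _ Ioi_subset_Ici_self (by rwa [← nhdsWithin_Ico_eq_nhdsGE hδ])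
  obtain ⟨ε, hε, hsub⟩ := mem_nhdsGT_iff_exists_Ioo_subset.1
    ((hslope.eventually (gt_mem_nhds hc)).and (hmin'.and (Ioo_mem_nhdsGT hδ)))
  have hb : ε / 2 ∈ Ioo 0 ε := ⟨half_pos hε, half_lt_self hε⟩
  obtain ⟨hbmin, hbδ⟩ := (hsub hb).2
  have hIcc : Icc 0 (ε / 2) ⊆ Ico 0 δ := fun t ht => ⟨ht.1, ht.2.trans_lt hbδ.2⟩
  obtain ⟨ξ, hξ, hξφ⟩ := exists_hasDerivAt_eq_slope φ φ' hb.1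
    (fun t ht => ((hφ t (hIcc ht)).continuousWithinAt).mono hIcc)
    (fun t ht => (hφ t (hIcc (Ioo_subset_Icc_self ht))).hasDerivAt
      (Ico_mem_nhds ht.1 (ht.2.trans hbδ.2)))
  have hφ'ξ : φ' ξ < 0 := by
    have hneg := (hsub ⟨hξ.1, hξ.2.trans hb.2⟩).1
    rwa [slope_def_field, hφ'0, sub_zero, sub_zero, div_lt_iff₀ hξ.1, zero_mul] at hneg
  rw [hξφ, sub_zero] at hφ'ξ
  exact (div_nonneg (sub_nonneg.2 hbmin) hb.1.le).not_gt hφ'ξ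

section Arc

variable {δ : ℝ} {ζ ζ' : ℝ → Vec n} {ℓ : Vec n → ℝ}

theorem TwiceDiffArc.hasDerivWithinAt_comp (hζ : TwiceDiffArc δ ζ ζ')
    (hℓ : Differentiable ℝ ℓ) {t : ℝ} (ht : t ∈ Ico 0 δ) :
    HasDerivWithinAt (ℓ ∘ ζ) (fderiv ℝ ℓ (ζ t) (ζ' t)) (Ico 0 δ) t :=
  (hℓ (ζ t)).hasFDerivAt.comp_hasDerivWithinAt t (hζ.1 t ht)

theorem TwiceDiffArc.hasDerivWithinAt_fderiv_comp (hζ : TwiceDiffArc δ ζ ζ')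
    (hℓ : Differentiable ℝ (fderiv ℝ ℓ)) {t : ℝ} (ht : t ∈ Ico 0 δ) :
    HasDerivWithinAt (fun s => fderiv ℝ ℓ (ζ s) (ζ' s))
      (fderiv ℝ (fderiv ℝ ℓ) (ζ t) (ζ' t) (ζ' t) + fderiv ℝ ℓ (ζ t) (derivWithin ζ' (Ico 0 δ) t))
      (Ico 0 δ) t :=
  ((hℓ (ζ t)).hasFDerivAt.comp_hasDerivWithinAt t (hζ.1 t ht)).clm_apply
    (hζ.2 t ht).hasDerivWithinAt

theorem TwiceDiffArc.hessForm_nonneg_of_isLocalMinOn (hζ : TwiceDiffArc δ ζ ζ') (hδ : 0 < δ)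
    (hℓ : ContDiff ℝ 2 ℓ) (hcrit : fderiv ℝ ℓ (ζ 0) = 0)
    (hmin : IsLocalMinOn (ℓ ∘ ζ) (Ico 0 δ) 0) :
    0 ≤ hessForm ℓ (ζ 0) (ζ' 0) := by
  have h0 : (0 : ℝ) ∈ Ico 0 δ := ⟨le_rfl, hδ⟩
  have hℓ' : Differentiable ℝ (fderiv ℝ ℓ) :=
    (hℓ.fderiv_right (m := 1) le_rfl).differentiable one_ne_zero
  have hφ'' := hζ.hasDerivWithinAt_fderiv_comp hℓ' h0
  rw [hcrit, zero_apply, add_zero] at hφ''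
  rw [hessForm_eq_fderiv_fderiv]
  exact nonneg_of_isLocalMinOn_Ico_of_hasDerivWithinAt hδ
    (fun t ht => hζ.hasDerivWithinAt_comp (hℓ.differentiable two_ne_zero) ht)
    (by simp [hcrit]) hφ'' hmin

end Arc

section Lagrangian

variable {f : Vec n → ℝ} {g : Fin m → Vec n → ℝ} {h : Fin p → Vec n → ℝ} {G H : Fin l → Vec n → ℝ}
  {xb : Vec n} {lam : Fin m → ℝ} {ρ : Fin p → ℝ} {μ ν : Fin l → ℝ}

theorem contDiff_lagr {k : WithTop ℕ∞} (hf : ContDiff ℝ k f) (hg : ∀ i, ContDiff ℝ k (g i))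
    (hh : ∀ j, ContDiff ℝ k (h j)) (hG : ∀ k', ContDiff ℝ k (G k'))
    (hH : ∀ k', ContDiff ℝ k (H k')) :
    ContDiff ℝ k (lagr f g h G H lam ρ μ ν) := by
  unfold lagr
  fun_prop

theorem hasFDerivAt_lagr {x : Vec n} (hf : DifferentiableAt ℝ f x)
    (hg : ∀ i, DifferentiableAt ℝ (g i) x) (hh : ∀ j, DifferentiableAt ℝ (h j) x)
    (hG : ∀ k, DifferentiableAt ℝ (G k) x) (hH : ∀ k, DifferentiableAt ℝ (H k) x) :
    HasFDerivAt (lagr f g h G H lam ρ μ ν)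
      (fderiv ℝ f x + ∑ i, lam i • fderiv ℝ (g i) x + ∑ j, ρ j • fderiv ℝ (h j) x +
        ∑ k, μ k • fderiv ℝ (G k) x + ∑ k, ν k • fderiv ℝ (H k) x) x :=
  (((hf.hasFDerivAt.add (HasFDerivAt.fun_sum fun i _ => (hg i).hasFDerivAt.const_mul (lam i))).add
    (HasFDerivAt.fun_sum fun j _ => (hh j).hasFDerivAt.const_mul (ρ j))).add
    (HasFDerivAt.fun_sum fun k _ => (hG k).hasFDerivAt.const_mul (μ k))).add
    (HasFDerivAt.fun_sum fun k _ => (hH k).hasFDerivAt.const_mul (ν k))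

theorem SStationarySystem.fderiv_lagr_eq_zero (hsys : SStationarySystem f g h G H xb lam ρ μ ν)
    (hf : DifferentiableAt ℝ f xb) (hg : ∀ i, DifferentiableAt ℝ (g i) xb)
    (hh : ∀ j, DifferentiableAt ℝ (h j) xb) (hG : ∀ k, DifferentiableAt ℝ (G k) xb)
    (hH : ∀ k, DifferentiableAt ℝ (H k) xb) :
    fderiv ℝ (lagr f g h G H lam ρ μ ν) xb = 0 := by
  rw [(hasFDerivAt_lagr hf hg hh hG hH).fderiv]
  simpa [gradient, map_add, map_sum, map_smul] using
    congrArg (InnerProductSpace.toDual ℝ (Vec n)) hsys.2.2.2.2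

theorem mem_IG_or_mem_IH_union_IGH (hxb : xb ∈ Feas g h G H) (k : Fin l) :
    k ∈ IG G H xb ∨ k ∈ IH G H xb ∪ IGH G H xb := by
  have := mul_eq_zero.1 (hxb.2.2 k)
  simp only [IG, IH, IGH, mem_union, mem_ofPred_eq]
  tauto

theorem mem_IH_or_mem_IG_union_IGH (hxb : xb ∈ Feas g h G H) (k : Fin l) :
    k ∈ IH G H xb ∨ k ∈ IG G H xb ∪ IGH G H xb := by
  have := mul_eq_zero.1 (hxb.2.2 k)
  simp only [IG, IH, IGH, mem_union, mem_ofPred_eq]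
  tauto

theorem SStationarySystem.lagr_eq (hsys : SStationarySystem f g h G H xb lam ρ μ ν)
    (hxb : xb ∈ Feas g h G H) {x : Vec n} (hhx : ∀ j, h j x = 0)
    (hgx : ∀ i ∈ Ig g xb, g i x = 0) (hGx : ∀ k ∈ IG G H xb, G k x = 0)
    (hHx : ∀ k ∈ IH G H xb, H k x = 0) :
    lagr f g h G H lam ρ μ ν x = f x := by
  obtain ⟨-, hlamg, hμ, hν, -⟩ := hsys
  have hg : ∀ i, lam i * g i x = 0 := fun i =>
    (mul_eq_zero.1 (hlamg i)).elim (fun h0 => by rw [h0, zero_mul])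
      fun hi => by rw [hgx i hi, mul_zero]
  have hG : ∀ k, μ k * G k x = 0 := fun k =>
    (mem_IG_or_mem_IH_union_IGH hxb k).elim (fun hk => by rw [hGx k hk, mul_zero])
      fun hk => by rw [hμ k hk, zero_mul]
  have hH : ∀ k, ν k * H k x = 0 := fun k =>
    (mem_IH_or_mem_IG_union_IGH hxb k).elim (fun hk => by rw [hHx k hk, mul_zero])
      fun hk => by rw [hν k hk, zero_mul]
  simp [lagr, hg, hG, hH, hhx]

theorem LocallyOptimal.isLocalMinOn_comp {s : Set ℝ} {ζ : ℝ → Vec n}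
    (hopt : LocallyOptimal f g h G H xb) (hζ : ContinuousWithinAt ζ s 0) (hζ0 : ζ 0 = xb)
    (hfeas : ∀ t ∈ s, ζ t ∈ Feas g h G H) :
    IsLocalMinOn (f ∘ ζ) s 0 := by
  obtain ⟨ε, hε, hloc⟩ := hopt.2
  rw [ContinuousWithinAt, hζ0] at hζ
  filter_upwards [hζ (ball_mem_nhds xb hε), self_mem_nhdsWithin] with t hball ht
  simpa [hζ0] using hloc (ζ t) (hfeas t ht) (mem_ball_iff_norm.1 hball)

end Lagrangian

theorem wsonc_under_wsocq_general {n m p l : ℕ} (f : Vec n → ℝ) (g : Fin m → Vec n → ℝ)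
    (h : Fin p → Vec n → ℝ) (G H : Fin l → Vec n → ℝ)
    (hf : ContDiff ℝ 2 f) (hg : ∀ i, ContDiff ℝ 2 (g i)) (hh : ∀ j, ContDiff ℝ 2 (h j))
    (hG : ∀ k, ContDiff ℝ 2 (G k)) (hH : ∀ k, ContDiff ℝ 2 (H k))
    (xb : Vec n)
    (hopt : LocallyOptimal f g h G H xb)
    (hcq : WSOCQ g h G H xb) :
    ∀ (lam : Fin m → ℝ) (ρ : Fin p → ℝ) (μ ν : Fin l → ℝ),
      SStationarySystem f g h G H xb lam ρ μ ν →
      ∀ d ∈ CritSubspace g h G H xb,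
        0 ≤ hessForm (lagr f g h G H lam ρ μ ν) xb d := by
  intro lam ρ μ ν hsys d hd
  rcases eq_or_ne d 0 with rfl | hd0
  · simp [hessForm_eq_fderiv_fderiv]
  obtain ⟨δ, hδ, _, _, -, -, ζ, ζ', hζ, hfeas, hζ0, hζ'0, hgζ, hGζ, hHζ⟩ := hcq d hd hd0
  have h0 : (0 : ℝ) ∈ Ico 0 δ := ⟨le_rfl, hδ⟩
  have hdiff {φ : Vec n → ℝ} (hφ : ContDiff ℝ 2 φ) : DifferentiableAt ℝ φ xb :=
    hφ.differentiable two_ne_zero xb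
  have hcrit : fderiv ℝ (lagr f g h G H lam ρ μ ν) (ζ 0) = 0 := hζ0 ▸
    hsys.fderiv_lagr_eq_zero (hdiff hf) (fun i => hdiff (hg i)) (fun j => hdiff (hh j))
      (fun k => hdiff (hG k)) fun k => hdiff (hH k)
  have hlagr : ∀ t ∈ Ico 0 δ, lagr f g h G H lam ρ μ ν (ζ t) = f (ζ t) := fun t ht =>
    hsys.lagr_eq hopt.1 (hfeas t ht).2.1 (hgζ t ht) (fun k hk => hGζ t ht k (Or.inl hk))
      fun k hk => hHζ t ht k (Or.inl hk)
  have hmin : IsLocalMinOn (lagr f g h G H lam ρ μ ν ∘ ζ) (Ico 0 δ) 0 := by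
    filter_upwards [hopt.isLocalMinOn_comp (hζ.1 0 h0).continuousWithinAt hζ0 hfeas,
      self_mem_nhdsWithin] with t hft ht
    simpa only [Function.comp, hlagr t ht, hlagr 0 h0] using hft
  simpa [hζ0, hζ'0] using
    hζ.hessForm_nonneg_of_isLocalMinOn hδ (contDiff_lagr hf hg hh hG hH) hcrit hmin

theorem wsonc_under_wsocq {n m p l : ℕ} (f : Vec n → ℝ) (g : Fin m → Vec n → ℝ)
    (h : Fin p → Vec n → ℝ) (G H : Fin l → Vec n → ℝ)
    (hf : ContDiff ℝ 2 f) (hg : ∀ i, ContDiff ℝ 2 (g i)) (hh : ∀ j, ContDiff ℝ 2 (h j))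
    (hG : ∀ k, ContDiff ℝ 2 (G k)) (hH : ∀ k, ContDiff ℝ 2 (H k))
    (xb : Vec n) (hxb : xb ∈ Feas g h G H)
    (hopt : LocallyOptimal f g h G H xb) (hS : SStationary f g h G H xb)
    (hcq : WSOCQ g h G H xb) :
    ∀ (lam : Fin m → ℝ) (ρ : Fin p → ℝ) (μ ν : Fin l → ℝ),
      SStationarySystem f g h G H xb lam ρ μ ν →
      ∀ d ∈ CritSubspace g h G H xb,
        0 ≤ hessForm (lagr f g h G H lam ρ μ ν) xb d :=
  wsonc_under_wsocq_general f g h G H hf hg hh hG hH xb hopt hcq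

end MPSC
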